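/- arXiv:1505.06929 — 6 statements merged into one kernel-verified Lean document; each statement's English description precedes it below -/
import Mathlib

section
/- If a functor G from Q≥0^r (the poset of r-tuples of non-negative rationals) to a category C is α-tame (i.e., isomorphic to the left Kan extension along multiplication by α of a functor indexed by N^r), then G is α/n-tame for any positive natural number n. -/
/-!
Put `β = α / n` and `u = β bβ v`, so `u ≤ v`. Since `⌊⌊n x⌋ / n⌋ = ⌊x⌋`, we get `bα u = bα v`, and
`n ⌊x⌋ ≤ ⌊n x⌋` gives `α bα v ≤ u`. Hence `G(α bα v ≤ v)` factors as `G(α bα u ≤ u)` followed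
by `G(u ≤ v)`; the first two maps are isomorphisms by `α`-tameness, so the third is one as well.
-/

open CategoryTheory CategoryTheory.Limits

attribute [local instance 2000] Preorder.smallCategory

/-- The poset of `r`-tuples of non-negative rational numbers, with the componentwise order. -/
abbrev Qr (r : ℕ) := Fin r → ℚ≥0

/-- The poset of `r`-tuples of natural numbers, with the componentwise order. -/
abbrev Nr (r : ℕ) := Fin r → ℕ

/-- `bfloor α v = join {w ∈ ℕ^r | α w ≤ v}`, computed componentwise as `⌊vᵢ/α⌋`. -/
def bfloor (α : ℚ≥0) {r : ℕ} (v : Qr r) : Nr r := fun i => Nat.floor ((v i : ℚ) / (α : ℚ))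

/-- The embedding `α : ℕ^r → ℚ≥0^r`, `w ↦ α w`. -/
def embQ (α : ℚ≥0) {r : ℕ} (w : Nr r) : Qr r := fun i => α * (w i : ℚ≥0)

theorem bfloor_mono (α : ℚ≥0) (r : ℕ) : Monotone (bfloor α (r := r)) := by
  intro v w h i
  exact Nat.floor_mono (by gcongr; exact_mod_cast h i)

theorem embQ_mono (α : ℚ≥0) (r : ℕ) : Monotone (embQ α (r := r)) := by
  intro v w h i
  dsimp [embQ]
  gcongr
  exact_mod_cast h i

/-- A functor `G : ℚ≥0^r ⥤ C` is `α`-tame if `G(α bα v ≤ v)` is an isomorphism for every `v`,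
i.e. `G` is (isomorphic to) the left Kan extension along `α : ℕ^r → ℚ≥0^r` of its restriction;
equivalently, `G` is constant on the fundamental domains of `α`. -/
def IsAlphaTame {C : Type*} [Category C] (α : ℚ≥0) {r : ℕ} (G : Qr r ⥤ C) : Prop :=
  ∀ (v : Qr r) (h : embQ α (bfloor α v) ≤ v), IsIso (G.map (homOfLE h))

/-- A functor is tame if it is `α`-tame for some positive rational `α`. -/
def IsTame {C : Type*} [Category C] {r : ℕ} (G : Qr r ⥤ C) : Prop :=
  ∃ α : ℚ≥0, 0 < α ∧ IsAlphaTame α G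

theorem CategoryTheory.Functor.isIso_map_homOfLE_of_trans {P C : Type*} [Preorder P] [Category C]
    (G : P ⥤ C) {a b c : P} (hab : a ≤ b) (hbc : b ≤ c) [IsIso (G.map (homOfLE hab))]
    [hac : IsIso (G.map (homOfLE (hab.trans hbc)))] : IsIso (G.map (homOfLE hbc)) := by
  rw [← homOfLE_comp hab hbc, G.map_comp] at hac
  exact IsIso.of_isIso_comp_left (G.map (homOfLE hab)) _

section Floor

variable {α : ℚ≥0} {r n : ℕ}

theorem bfloor_div_natCast_div (hn : 0 < n) (v : Qr r) :
    (fun i => bfloor (α / n) v i / n) = bfloor α v := by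
  funext i
  have hx : (v i : ℚ) / α = (v i * n / α) / n := by field_simp
  simp only [bfloor, NNRat.cast_div, NNRat.cast_natCast, div_div_eq_mul_div]
  rw [hx, Nat.floor_div_natCast]

theorem bfloor_embQ_div (hα : α ≠ 0) (w : Nr r) :
    bfloor α (embQ (α / n) w) = fun i => w i / n := by
  funext i
  have hq : (α : ℚ) ≠ 0 := by exact_mod_cast hα
  have hx : ((α / n * (w i : ℚ≥0) : ℚ≥0) : ℚ) / α = (w i : ℚ) / n := by
    push_cast; field_simp
  simp only [bfloor, embQ]
  rw [hx, Nat.floor_div_natCast, Nat.floor_natCast]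

theorem embQ_natDiv_le (w : Nr r) : embQ α (fun i => w i / n) ≤ embQ (α / n) w := by
  intro i
  simp only [embQ]
  rw [div_mul_eq_mul_div, mul_div_assoc]
  gcongr
  exact_mod_cast Nat.cast_div_le

end Floor

theorem IsAlphaTame.isIso_map_of_bfloor_eq {C : Type*} [Category C] {α : ℚ≥0} {r : ℕ}
    {G : Qr r ⥤ C} (hG : IsAlphaTame α G) {u v : Qr r} (huv : u ≤ v)
    (hb : bfloor α u = bfloor α v) (hu : embQ α (bfloor α v) ≤ u) :
    IsIso (G.map (homOfLE huv)) := by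
  have : IsIso (G.map (homOfLE hu)) := by
    convert hG u (hb ▸ hu) using 3 <;> rw [hb]
  have := hG v (hu.trans huv)
  exact G.isIso_map_homOfLE_of_trans hu huv

/-- If `G : ℚ≥0^r ⥤ C` is `α`-tame, then it is `α/n`-tame for every positive natural `n`. -/
theorem alphaTame_div {C : Type*} [Category C] {r : ℕ} (α : ℚ≥0) (hα : 0 < α)
    (G : Qr r ⥤ C) (hG : IsAlphaTame α G) (n : ℕ) (hn : 0 < n) :
    IsAlphaTame (α / n) G := by
  intro v h
  have hb : bfloor α (embQ (α / n) (bfloor (α / n) v)) = bfloor α v := by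
    rw [bfloor_embQ_div hα.ne', bfloor_div_natCast_div hn]
  refine hG.isIso_map_of_bfloor_eq h hb ?_
  rw [← bfloor_div_natCast_div hn]
  exact embQ_natDiv_le _
end

section
/- The tame functors from Q≥0^r to Vect_K form an abelian subcategory of Fun(Q≥0^r, Vect_K): in any short exact sequence 0 → F → G → H → 0 of functors, if two of F, G, H are tame then so is the third, and finite direct sums of tame functors are tame. -/
open CategoryTheory CategoryTheory.Limits

set_option synthInstance.maxHeartbeats 1000000
set_option maxHeartbeats 1000000

attribute [local instance 2000] Preorder.smallCategory

/-!
Tameness at scale `α` says that `G(u ≤ v)` is an isomorphism whenever `u` and `v` lie in the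
same fundamental domain of `α`. Fundamental domains of `α / n` refine those of `α`, so an
`α`-tame functor is `α / n`-tame, and two positive rationals have a common refinement
`α / m = β / n`: any two tame functors are tame at one common scale. At that scale the
two-out-of-three property is objectwise: evaluating a short exact sequence at `u ≤ v` gives a
morphism of short exact sequences, and the four lemmas make its third component an isomorphism
once two of them are. A direct sum `F ⊞ G` is the middle term of a split short exact sequence.
-/

section Scales

variable (α : ℚ≥0) {r : ℕ}

lemma embQ_bfloor_le (v : Qr r) : embQ α (bfloor α v) ≤ v := by
  intro i
  rcases eq_or_ne α 0 with rfl | hα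
  · simp [embQ]
  rw [← NNRat.coe_le_coe]
  push_cast [embQ, bfloor]
  calc (α : ℚ) * ⌊(v i : ℚ) / α⌋₊ ≤ α * ((v i : ℚ) / α) := by
        gcongr; exact Nat.floor_le (by positivity)
    _ = v i := mul_div_cancel₀ _ (by exact_mod_cast hα)

lemma bfloor_embQ_bfloor_div {n : ℕ} (hn : 0 < n) (v : Qr r) :
    bfloor α (embQ (α / n) (bfloor (α / n) v)) = bfloor α v := by
  funext i
  rcases eq_or_ne α 0 with rfl | hα
  · simp [bfloor, embQ]
  have hα : (α : ℚ) ≠ 0 := by exact_mod_cast hα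
  have hn : (n : ℚ) ≠ 0 := by exact_mod_cast hn.ne'
  simp only [bfloor, embQ]
  push_cast
  -- with `x = vᵢ / α` the claim is `⌊⌊n x⌋ / n⌋ = ⌊x⌋`
  set x : ℚ := (v i : ℚ) / α with hx
  rw [show (v i : ℚ) / (α / n) = n * x by rw [hx]; field_simp,
    show (α : ℚ) / n * (⌊n * x⌋₊ : ℚ) / α = (⌊n * x⌋₊ : ℚ) / n by field_simp,
    Nat.floor_div_eq_div, ← Nat.floor_div_natCast, mul_div_cancel_left₀ _ hn]

lemma NNRat.exists_div_natCast_eq_div_natCast {α β : ℚ≥0} (hα : 0 < α) (hβ : 0 < β) :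
    ∃ m n : ℕ, 0 < m ∧ 0 < n ∧ α / m = β / n := by
  refine ⟨(α / β).num, (α / β).den, NNRat.num_pos.mpr (div_pos hα hβ), (α / β).den_pos, ?_⟩
  have hm : ((α / β).num : ℚ≥0) ≠ 0 := by exact_mod_cast (NNRat.num_pos.mpr (div_pos hα hβ)).ne'
  rw [div_eq_div_iff hm (by exact_mod_cast (α / β).den_pos.ne'), ← NNRat.mul_den_eq_num,
    ← mul_assoc, mul_div_cancel₀ _ hβ.ne']

end Scales

namespace IsAlphaTame

variable {C : Type*} [Category C] {α : ℚ≥0} {r : ℕ} {G : Qr r ⥤ C}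

lemma isIso_map_of_eq (hG : IsAlphaTame α G) {u v : Qr r} (hu : u = embQ α (bfloor α v))
    (huv : u ≤ v) : IsIso (G.map (homOfLE huv)) := by
  subst hu
  exact hG v huv

lemma isIso_map (hG : IsAlphaTame α G) {u v : Qr r} (huv : u ≤ v)
    (hbf : bfloor α u = bfloor α v) : IsIso (G.map (homOfLE huv)) := by
  have hu := embQ_bfloor_le α u
  have : IsIso (G.map (homOfLE hu)) := hG u hu
  have : IsIso (G.map (homOfLE hu) ≫ G.map (homOfLE huv)) := by
    rw [← G.map_comp]
    exact hG.isIso_map_of_eq (congrArg (embQ α) hbf) (hu.trans huv)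
  exact IsIso.of_isIso_comp_left (G.map (homOfLE hu)) _

lemma div_natCast (hG : IsAlphaTame α G) {n : ℕ} (hn : 0 < n) : IsAlphaTame (α / n) G :=
  fun v h => hG.isIso_map h (bfloor_embQ_bfloor_div α hn v)

end IsAlphaTame

namespace IsTame

variable {C D : Type*} [Category C] [Category D] {r : ℕ}

lemma exists_common_scale {F : Qr r ⥤ C} {G : Qr r ⥤ D} (hF : IsTame F) (hG : IsTame G) :
    ∃ γ : ℚ≥0, 0 < γ ∧ IsAlphaTame γ F ∧ IsAlphaTame γ G := by
  obtain ⟨α, hα, hFα⟩ := hF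
  obtain ⟨β, hβ, hGβ⟩ := hG
  obtain ⟨m, n, hm, hn, hmn⟩ := NNRat.exists_div_natCast_eq_div_natCast hα hβ
  refine ⟨α / m, div_pos hα (by exact_mod_cast hm), hFα.div_natCast hm, ?_⟩
  rw [hmn]
  exact hGβ.div_natCast hn

lemma of_isIso_map {E : Type*} [Category E] {F : Qr r ⥤ C} {G : Qr r ⥤ D} {H : Qr r ⥤ E}
    (hF : IsTame F) (hG : IsTame G)
    (hH : ∀ {u v : Qr r} (h : u ⟶ v), IsIso (F.map h) → IsIso (G.map h) → IsIso (H.map h)) :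
    IsTame H := by
  obtain ⟨γ, hγ, hFγ, hGγ⟩ := hF.exists_common_scale hG
  exact ⟨γ, hγ, fun v h => hH _ (hFγ v h) (hGγ v h)⟩

end IsTame

namespace CategoryTheory.ShortComplex

variable {C : Type*} [Category C] [Abelian C] {S₁ S₂ : ShortComplex C}

lemma isIso₁_of_shortExact_of_isIso₂₃ (φ : S₁ ⟶ S₂) (h₁ : S₁.ShortExact) (h₂ : S₂.ShortExact)
    (_ : IsIso φ.τ₂) (_ : IsIso φ.τ₃) : IsIso φ.τ₁ := by
  have := h₁.mono_f
  have : Mono φ.τ₁ := mono_of_mono_fac φ.comm₁₂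
  have := epi_of_mono_of_epi_of_mono φ h₁.exact h₂.mono_f inferInstance inferInstance
  exact isIso_of_mono_of_epi _

lemma isIso₃_of_shortExact_of_isIso₁₂ (φ : S₁ ⟶ S₂) (h₁ : S₁.ShortExact) (h₂ : S₂.ShortExact)
    (_ : IsIso φ.τ₁) (_ : IsIso φ.τ₂) : IsIso φ.τ₃ := by
  have := h₂.epi_g
  have : Epi φ.τ₃ := epi_of_epi_fac φ.comm₂₃.symm
  have := mono_of_epi_of_epi_of_mono φ h₂.exact h₁.epi_g inferInstance inferInstance
  exact isIso_of_mono_of_epi _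

end CategoryTheory.ShortComplex

namespace CategoryTheory.ShortComplex.ShortExact

variable {J C : Type*} [Category J] [Category C] [Abelian C] {S : ShortComplex (J ⥤ C)}
  {u v : J}

lemma isIso_map_X₁ (hS : S.ShortExact) (h : u ⟶ v) (h₂ : IsIso (S.X₂.map h))
    (h₃ : IsIso (S.X₃.map h)) : IsIso (S.X₁.map h) :=
  isIso₁_of_shortExact_of_isIso₂₃ (S.mapNatTrans ((evaluation J C).map h))
    (hS.map_of_exact _) (hS.map_of_exact _) h₂ h₃

lemma isIso_map_X₂ (hS : S.ShortExact) (h : u ⟶ v) (h₁ : IsIso (S.X₁.map h))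
    (h₃ : IsIso (S.X₃.map h)) : IsIso (S.X₂.map h) :=
  isIso₂_of_shortExact_of_isIso₁₃' (S.mapNatTrans ((evaluation J C).map h))
    (hS.map_of_exact _) (hS.map_of_exact _) h₁ h₃

lemma isIso_map_X₃ (hS : S.ShortExact) (h : u ⟶ v) (h₁ : IsIso (S.X₁.map h))
    (h₂ : IsIso (S.X₂.map h)) : IsIso (S.X₃.map h) :=
  isIso₃_of_shortExact_of_isIso₁₂ (S.mapNatTrans ((evaluation J C).map h))
    (hS.map_of_exact _) (hS.map_of_exact _) h₁ h₂

variable {r : ℕ} {S : ShortComplex (Qr r ⥤ C)}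

lemma isTame_X₁ (hS : S.ShortExact) (h₂ : IsTame S.X₂) (h₃ : IsTame S.X₃) : IsTame S.X₁ :=
  h₂.of_isIso_map h₃ fun h => hS.isIso_map_X₁ h

lemma isTame_X₂ (hS : S.ShortExact) (h₁ : IsTame S.X₁) (h₃ : IsTame S.X₃) : IsTame S.X₂ :=
  h₁.of_isIso_map h₃ fun h => hS.isIso_map_X₂ h

lemma isTame_X₃ (hS : S.ShortExact) (h₁ : IsTame S.X₁) (h₂ : IsTame S.X₂) : IsTame S.X₃ :=
  h₁.of_isIso_map h₂ fun h => hS.isIso_map_X₃ h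

end CategoryTheory.ShortComplex.ShortExact

/-- Tame functors form an abelian subcategory of `Fun(ℚ≥0^r, Vect_K)`: in any short exact
sequence `0 → F → G → H → 0`, if two of `F`, `G`, `H` are tame then so is the third, and
finite direct sums of tame functors are tame. -/
theorem tame_abelian_subcategory (K : Type) [Field K] (r : ℕ) :
    (∀ (F G H : Qr r ⥤ ModuleCat K) (f : F ⟶ G) (g : G ⟶ H) (w : f ≫ g = 0)
      (_ : (ShortComplex.mk f g w).ShortExact),
        (IsTame F → IsTame G → IsTame H) ∧
        (IsTame F → IsTame H → IsTame G) ∧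
        (IsTame G → IsTame H → IsTame F)) ∧
    (∀ (F G : Qr r ⥤ ModuleCat K), IsTame F → IsTame G → IsTame (F ⊞ G)) := by
  refine ⟨fun F G H f g w hS => ⟨hS.isTame_X₃, hS.isTame_X₂, hS.isTame_X₁⟩, fun F G hF hG => ?_⟩
  exact (ShortComplex.Splitting.ofHasBinaryBiproduct F G).shortExact.isTame_X₂ hF hG
end

section
/- Let α be a positive rational and F: N^r → Vect_K a functor. F is compact (every increasing chain of subfunctors with colimit F stabilizes) if and only if the left Kan extension α^!F: Q≥0^r → Vect_K is compact. -/
open CategoryTheory CategoryTheory.Limits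

set_option synthInstance.maxHeartbeats 1000000
set_option maxHeartbeats 1000000

attribute [local instance 2000] Preorder.smallCategory

/-- The functor `ℕ^r ⥤ ℚ≥0^r`, `w ↦ α w`. -/
def embFunctor (α : ℚ≥0) (r : ℕ) : Nr r ⥤ Qr r := (embQ_mono α r).functor

/-- A subfunctor of a functor `F : I ⥤ Vect_K`: a family of submodules compatible with the
structure maps of `F`. -/
structure Subfunctor (K : Type) [Field K] {I : Type} [Category I] (F : I ⥤ ModuleCat K) where
  toFun : ∀ i, Submodule K (F.obj i)
  map_le : ∀ {i j : I} (h : i ⟶ j), Submodule.map (F.map h).hom (toFun i) ≤ toFun j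

/-- `F` is compact: every increasing chain of subfunctors whose colimit (objectwise union)
is `F` stabilizes. -/
def IsCompactFunctor (K : Type) [Field K] {I : Type} [Category I] (F : I ⥤ ModuleCat K) :
    Prop :=
  ∀ S : ℕ → Subfunctor K F, (∀ n i, (S n).toFun i ≤ (S (n + 1)).toFun i) →
    (∀ i, ⨆ n, (S n).toFun i = ⊤) → ∃ k, ∀ i, (S k).toFun i = ⊤

/-! Since `α : ℕ^r → ℚ≥0^r` is fully faithful, the unit `F ⟶ α^* α^! F` is an isomorphism, and
`(α^! F)(v) ≅ F(⌊v/α⌋)` because `⌊v/α⌋` is terminal in the comma category `α ↓ v`; so every value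
of `α^! F` is the image of a value of `F`. Subfunctors then move in both directions: a chain in
`α^! F` pulls back to a chain in `F`, a chain in `F` generates a chain in `α^! F` by taking images,
both constructions preserve exhaustion, and stabilization of one chain forces that of the other. -/

section Transport

variable {K : Type} [Field K] {J I : Type} [Category J] [Category I]
  {F : J ⥤ ModuleCat K} {G : I ⥤ ModuleCat K} {L : J ⥤ I}

def ImageGenerates (η : F ⟶ L ⋙ G) : Prop :=
  ∀ v, ∃ (w : J) (f : L.obj w ⟶ v), Function.Surjective (η.app w ≫ G.map f)

namespace Subfunctor

def comap (η : F ⟶ L ⋙ G) (S : Subfunctor K G) : Subfunctor K F where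
  toFun w := (S.toFun (L.obj w)).comap (η.app w).hom
  map_le {w w'} h := by
    rw [Submodule.map_le_iff_le_comap, ← Submodule.comap_comp, ← ModuleCat.hom_comp,
      η.naturality h, ModuleCat.hom_comp, Submodule.comap_comp]
    exact Submodule.comap_mono (Submodule.map_le_iff_le_comap.mp (S.map_le (L.map h)))

def image (η : F ⟶ L ⋙ G) (T : Subfunctor K F) : Subfunctor K G where
  toFun v := ⨆ (w : J) (f : L.obj w ⟶ v), (T.toFun w).map (η.app w ≫ G.map f).hom
  map_le {v v'} g := by
    simp only [Submodule.map_iSup, iSup_le_iff]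
    intro w f
    rw [← Submodule.map_comp, ← ModuleCat.hom_comp, Category.assoc, ← G.map_comp]
    exact le_iSup₂_of_le w (f ≫ g) le_rfl

theorem iSup_comap_eq_top (η : F ⟶ L ⋙ G) {S : ℕ → Subfunctor K G}
    (hS : ∀ n v, (S n).toFun v ≤ (S (n + 1)).toFun v) (hsup : ∀ v, ⨆ n, (S n).toFun v = ⊤)
    (w : J) : ⨆ n, ((S n).comap η).toFun w = ⊤ := by
  rw [eq_top_iff]
  rintro x -
  have hx : η.app w x ∈ ⨆ n, (S n).toFun (L.obj w) := by
    rw [hsup]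
    trivial
  obtain ⟨n, hn⟩ := (Submodule.mem_iSup_of_directed _
    (monotone_nat_of_le_succ fun n => hS n _).directed_le).mp hx
  exact Submodule.mem_iSup_of_mem n hn

theorem iSup_image_eq_top (η : F ⟶ L ⋙ G) (hgen : ImageGenerates η)
    {T : ℕ → Subfunctor K F} (hsup : ∀ w, ⨆ n, (T n).toFun w = ⊤) (v : I) :
    ⨆ n, ((T n).image η).toFun v = ⊤ := by
  obtain ⟨w, f, hsurj⟩ := hgen v
  refine eq_top_iff.mpr ?_
  calc ⊤ = ⨆ n, ((T n).toFun w).map (η.app w ≫ G.map f).hom := by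
        rw [← Submodule.map_iSup, hsup, Submodule.map_top]
        exact (LinearMap.range_eq_top.mpr hsurj).symm
    _ ≤ ⨆ n, ((T n).image η).toFun v := iSup_mono fun n => le_iSup₂_of_le w f le_rfl

end Subfunctor

theorem IsCompactFunctor.of_natTrans (η : F ⟶ L ⋙ G) (hgen : ImageGenerates η)
    (hF : IsCompactFunctor K F) : IsCompactFunctor K G := by
  intro S hS hsup
  obtain ⟨k, hk⟩ := hF (fun n => (S n).comap η) (fun n w => Submodule.comap_mono (hS n _))
    (Subfunctor.iSup_comap_eq_top η hS hsup)
  refine ⟨k, fun v => eq_top_iff.mpr ?_⟩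
  rintro y -
  obtain ⟨w, f, hsurj⟩ := hgen v
  obtain ⟨x, rfl⟩ := hsurj y
  have hx : η.app w x ∈ (S k).toFun (L.obj w) := by
    change x ∈ ((S k).comap η).toFun w
    rw [hk w]
    trivial
  exact (S k).map_le f (Submodule.mem_map_of_mem hx)

theorem IsCompactFunctor.of_natTrans_of_full [L.Full] (η : F ⟶ L ⋙ G) [IsIso η]
    (hgen : ImageGenerates η) (hG : IsCompactFunctor K G) : IsCompactFunctor K F := by
  intro T hT hsup
  obtain ⟨k, hk⟩ := hG (fun n => (T n).image η)
    (fun n v => iSup₂_mono fun w f => Submodule.map_mono (hT n w))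
    (Subfunctor.iSup_image_eq_top η hgen hsup)
  refine ⟨k, fun w₀ => ?_⟩
  have hbij := ConcreteCategory.bijective_of_isIso (η.app w₀)
  apply Submodule.map_injective_of_injective hbij.1
  rw [Submodule.map_top, LinearMap.range_eq_top.mpr hbij.2, eq_top_iff, ← hk (L.obj w₀)]
  -- by fullness every generator `η_w ≫ G (L g)` of the image at `L w₀` factors through `η_{w₀}`
  refine iSup₂_le fun w f => ?_
  obtain ⟨g, rfl⟩ := L.map_surjective f
  rw [show η.app w ≫ G.map (L.map g) = F.map g ≫ η.app w₀ from (η.naturality g).symm,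
    ModuleCat.hom_comp, Submodule.map_comp]
  exact Submodule.map_mono ((T k).map_le g)

end Transport

section Kan

variable {r : ℕ} {α : ℚ≥0}

theorem gc_embQ_bfloor (hα : 0 < α) : GaloisConnection (embQ α (r := r)) (bfloor α) := by
  have hα' : (0 : ℚ) < α := by exact_mod_cast hα
  refine fun w v => forall_congr' fun i => ?_
  rw [bfloor, Nat.le_floor_iff (by positivity), le_div_iff₀ hα', embQ, ← NNRat.coe_le_coe]
  push_cast
  rw [mul_comm]

theorem embFunctor_full (hα : 0 < α) : (embFunctor α r).Full where
  map_surjective {w w'} f := ⟨homOfLE fun i => by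
    have h := leOfHom f i
    simp only [embFunctor, Monotone.functor_obj, embQ] at h
    exact_mod_cast le_of_mul_le_mul_left h hα, Subsingleton.elim _ _⟩

noncomputable def isTerminalCostructuredArrowBfloor (hα : 0 < α) (v : Qr r) :
    IsTerminal (CostructuredArrow.mk (S := embFunctor α r) (Y := bfloor α v)
      (homOfLE ((gc_embQ_bfloor hα).l_u_le v))) :=
  IsTerminal.ofUniqueHom
    (fun g => CostructuredArrow.homMk
      (homOfLE ((gc_embQ_bfloor hα _ v).mp (leOfHom g.hom))) (Subsingleton.elim _ _))
    (fun _ _ => CostructuredArrow.hom_ext _ _ (Subsingleton.elim _ _))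

variable {K : Type} [Field K]

theorem surjective_lanUnit_comp_map_bfloor (hα : 0 < α) (F : Nr r ⥤ ModuleCat K) (v : Qr r) :
    Function.Surjective (((embFunctor α r).leftKanExtensionUnit F).app (bfloor α v) ≫
      ((embFunctor α r).leftKanExtension F).map (homOfLE ((gc_embQ_bfloor hα).l_u_le v))) := by
  have h := (Functor.isPointwiseLeftKanExtensionLeftKanExtensionUnit (embFunctor α r) F
      v).isIso_ι_app_of_isTerminal _ (isTerminalCostructuredArrowBfloor hα v)
  -- checking `h` against this type directly, without the intermediate `have`, times out
  have : IsIso (((embFunctor α r).leftKanExtensionUnit F).app (bfloor α v) ≫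
      ((embFunctor α r).leftKanExtension F).map (homOfLE ((gc_embQ_bfloor hα).l_u_le v))) := h
  exact (ConcreteCategory.bijective_of_isIso _).2

end Kan

/-- For a positive rational `α`, a functor `F : ℕ^r ⥤ Vect_K` is compact if and only if its
left Kan extension `α^! F : ℚ≥0^r ⥤ Vect_K` is compact. -/
theorem isCompact_iff_isCompact_lan (K : Type) [Field K] (r : ℕ) (α : ℚ≥0) (hα : 0 < α)
    (F : Nr r ⥤ ModuleCat K) :
    IsCompactFunctor K F ↔
      IsCompactFunctor K ((embFunctor α r).leftKanExtension F) := by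
  have := embFunctor_full (r := r) hα
  have : (embFunctor α r).Faithful := ⟨fun _ => Subsingleton.elim _ _⟩
  have : IsIso ((embFunctor α r).leftKanExtensionUnit F) :=
    (Functor.isPointwiseLeftKanExtensionLeftKanExtensionUnit (embFunctor α r) F).isIso_hom
  have hgen : ImageGenerates ((embFunctor α r).leftKanExtensionUnit F) := fun v =>
    ⟨bfloor α v, _, surjective_lanUnit_comp_map_bfloor hα F v⟩
  exact ⟨.of_natTrans _ hgen, .of_natTrans_of_full _ hgen⟩
end

section
/- A functor F: N^r → Vect_K is compact if and only if F is of finite rank, if and only if (1) F(v) is finite dimensional for every v and (2) there is a natural number n such that for every v = (v_1,…,v_r), the map F((min(n,v_1),…,min(n,v_r)) ≤ v) is an isomorphism. -/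
open CategoryTheory CategoryTheory.Limits

set_option synthInstance.maxHeartbeats 1000000
set_option maxHeartbeats 1000000

attribute [local instance 2000] Preorder.smallCategory

/-- `F` is of finite rank: it admits a finite (minimal) set of generators, i.e. finitely many
elements `x k ∈ F(v k)` whose images under the structure maps span every value of `F`. -/
def IsFiniteRank (K : Type) [Field K] {I : Type} [Category I] (F : I ⥤ ModuleCat K) : Prop :=
  ∃ (n : ℕ) (v : Fin n → I) (x : ∀ k, F.obj (v k)),
    ∀ u : I, Submodule.span K {y | ∃ (k : Fin n) (h : v k ⟶ u), y = (F.map h).hom (x k)} = ⊤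

/-!
Compactness, applied to the chain of subfunctors generated by the boxes `[0, n]ʳ`, shows that a
compact `F` is generated by some box `[0, k]ʳ`; applied to the chain generated by all `F w` with
`w ≠ v` together with an exhausting chain of subspaces of `F v`, it shows by well-founded
induction on `v` that every `F v` is finite dimensional. Bases of the finitely many `F w` in the
box then generate `F`, and a finitely generated functor is compact because each of its
generators already lies in some member of a chain.

Once `F` is generated by the box `[0, k]ʳ`, every structure map `F (x ≤ y)` with `cap k y ≤ x`
is surjective, so `dim F` can only decrease along such steps. Dickson's lemma gives an `n` past
which it no longer decreases; the surjections `F (cap n v ≤ v)` then preserve dimension and are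
isomorphisms.
-/

theorem IsFiniteRank.isCompactFunctor {K : Type} [Field K] {I : Type} [Category I]
    {F : I ⥤ ModuleCat K} (h : IsFiniteRank K F) : IsCompactFunctor K F := by
  obtain ⟨n, v, x, hspan⟩ := h
  intro S hS htop
  have hSmono (i : I) : Monotone fun m => (S m).toFun i := monotone_nat_of_le_succ (hS · i)
  have hx (k : Fin n) : ∃ m, x k ∈ (S m).toFun (v k) :=
    (Submodule.mem_iSup_of_directed _ (hSmono (v k)).directed_le).mp (htop (v k) ▸ trivial)
  choose m hm using hx
  refine ⟨Finset.univ.sup m, fun u =>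
    eq_top_iff.mpr ((hspan u).ge.trans (Submodule.span_le.mpr ?_))⟩
  rintro _ ⟨k, h, rfl⟩
  exact (S _).map_le h ⟨x k, hSmono (v k) (Finset.le_sup (Finset.mem_univ k)) (hm k), rfl⟩

theorem isFiniteRank_of_finite {K : Type} [Field K] {I : Type} [Category I]
    {F : I ⥤ ModuleCat K} {ι : Type*} [Finite ι] (v : ι → I) (x : ∀ j, F.obj (v j))
    (hspan : ∀ u, Submodule.span K {y | ∃ (j : ι) (h : v j ⟶ u), y = (F.map h).hom (x j)} = ⊤) :
    IsFiniteRank K F := by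
  obtain ⟨n, ⟨e⟩⟩ := Finite.exists_equiv_fin ι
  refine ⟨n, v ∘ e.symm, fun k => x (e.symm k), fun u => ?_⟩
  rw [← hspan u]
  congr 1
  ext y
  constructor
  · rintro ⟨k, h, hy⟩
    exact ⟨e.symm k, h, hy⟩
  · rintro ⟨j, h, hy⟩
    obtain ⟨k, rfl⟩ := e.symm.surjective j
    exact ⟨k, h, hy⟩

theorem map_homOfLE_map_homOfLE_apply {K : Type} [Field K] {I : Type} [Preorder I]
    (F : I ⥤ ModuleCat K) {a b c : I} (hab : a ≤ b) (hbc : b ≤ c) (x : F.obj a) :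
    F.map (homOfLE hbc) (F.map (homOfLE hab) x) = F.map (homOfLE (hab.trans hbc)) x := by
  rw [← homOfLE_comp hab hbc, F.map_comp]
  rfl

theorem map_homOfLE_refl_apply {K : Type} [Field K] {I : Type} [Preorder I]
    (F : I ⥤ ModuleCat K) {a : I} (h : a ≤ a) (x : F.obj a) : F.map (homOfLE h) x = x := by
  rw [show homOfLE h = 𝟙 a from rfl, F.map_id]
  rfl

theorem FiniteDimensional.of_forall_chain {K V : Type*} [DivisionRing K] [AddCommGroup V]
    [Module K V] (h : ∀ C : ℕ → Submodule K V, Monotone C → ⨆ m, C m = ⊤ → ∃ m, C m = ⊤) :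
    FiniteDimensional K V := by
  by_contra hfin
  let B := Module.Basis.ofVectorSpace K V
  have : Infinite (Module.Basis.ofVectorSpaceIndex K V) :=
    not_finite_iff_infinite.mp fun _ => hfin (Module.Finite.of_basis B)
  let e := Infinite.natEmbedding (Module.Basis.ofVectorSpaceIndex K V)
  -- Each vector has only finitely many nonzero coordinates, hence lies in some `C m`.
  let C : ℕ → Submodule K V := fun m => ⨅ j ≥ m, LinearMap.ker (B.coord (e j))
  have hC : Monotone C := fun m m' hm => le_iInf₂ fun j hj => iInf₂_le j (hm.trans hj)
  have htop : ⨆ m, C m = ⊤ := by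
    refine eq_top_iff.mpr fun v _ => ?_
    obtain ⟨M, hM⟩ := ((B.repr v).support.finite_toSet.preimage e.injective.injOn).bddAbove
    refine Submodule.mem_iSup_of_mem (M + 1) (Submodule.mem_iInf _ |>.mpr fun j => ?_)
    refine Submodule.mem_iInf _ |>.mpr fun hj => ?_
    by_contra hv
    have : j ≤ M := hM (show e j ∈ (B.repr v).support by simpa using hv)
    omega
  obtain ⟨m, hm⟩ := h C hC htop
  have hmem : B (e m) ∈ C m := hm ▸ Submodule.mem_top
  simp only [C, Submodule.mem_iInf, LinearMap.mem_ker, Module.Basis.coord_apply,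
    Module.Basis.repr_self] at hmem
  simpa using hmem m le_rfl

theorem Submodule.finiteDimensional_quotient_of_forall_chain {K V : Type*} [DivisionRing K]
    [AddCommGroup V] [Module K V] (R : Submodule K V)
    (h : ∀ C : ℕ → Submodule K V, Monotone C → ⨆ m, C m = ⊤ → ∃ m, R ⊔ C m = ⊤) :
    FiniteDimensional K (V ⧸ R) := by
  refine FiniteDimensional.of_forall_chain fun P hP htop => ?_
  have hcomap : ⨆ m, (P m).comap R.mkQ = ⊤ := by
    refine eq_top_iff.mpr fun v _ => ?_
    obtain ⟨m, hm⟩ := (Submodule.mem_iSup_of_directed _ hP.directed_le).mp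
      (htop ▸ Submodule.mem_top : R.mkQ v ∈ ⨆ m, P m)
    exact Submodule.mem_iSup_of_mem m hm
  obtain ⟨m, hm⟩ := h _ (fun _ _ hmm' => Submodule.comap_mono (hP hmm')) hcomap
  refine ⟨m, ?_⟩
  rw [sup_eq_right.mpr (R.ker_mkQ.ge.trans (LinearMap.ker_le_comap R.mkQ))] at hm
  rw [← Submodule.map_comap_eq_of_surjective R.mkQ_surjective (P m), hm, Submodule.map_top,
    Submodule.range_mkQ]

namespace Nr

variable {r : ℕ}

def cap (n : ℕ) (u : Nr r) : Nr r := fun i => min n (u i)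

theorem cap_le_self (n : ℕ) (u : Nr r) : cap n u ≤ u := fun _ => min_le_right _ _

theorem cap_le_const (n : ℕ) (u : Nr r) : cap n u ≤ fun _ => n := fun _ => min_le_left _ _

theorem cap_mono {n : ℕ} : Monotone (cap (r := r) n) := fun _ _ h i => min_le_min le_rfl (h i)

theorem cap_le_cap_left {n m : ℕ} (h : n ≤ m) (u : Nr r) : cap n u ≤ cap m u :=
  fun _ => min_le_min h le_rfl

theorem cap_eq_self {n : ℕ} {u : Nr r} (h : u ≤ fun _ => n) : cap n u = u :=
  funext fun i => min_eq_right (h i)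

theorem cap_cap {k n : ℕ} (h : k ≤ n) (u : Nr r) : cap k (cap n u) = cap k u :=
  funext fun i => by simp only [cap, ← min_assoc, min_eq_left h]

/-- By Dickson's lemma each set `{x | cap k x = τ ∧ g x ≤ t}` has finitely many minimal elements,
and only finitely many `τ, t` occur; `n` is chosen above all of these minimal elements. -/
theorem exists_apply_cap_eq (k : ℕ) (g : Nr r → ℕ)
    (hg : ∀ ⦃x y : Nr r⦄, x ≤ y → cap k y ≤ x → g y ≤ g x) :
    ∃ n, k ≤ n ∧ ∀ x, g (cap n x) = g x := by
  let S : Nr r → ℕ → Set (Nr r) := fun τ t => {x | cap k x = τ ∧ g x ≤ t}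
  have hfin : (⋃ τ ∈ Set.Iic (fun _ => k), ⋃ t ∈ Set.Iic (g τ),
      {m | Minimal (· ∈ S τ t) m}).Finite :=
    (Set.finite_Iic _).biUnion fun τ _ => (Set.finite_Iic _).biUnion fun t _ =>
      WellQuasiOrderedLE.finite_of_isAntichain (setOfPred_minimal_antichain _)
  obtain ⟨b, hb⟩ := hfin.bddAbove
  set n := max k (Finset.univ.sup b)
  refine ⟨n, le_max_left _ _, fun x => ?_⟩
  obtain ⟨m, hmx, hm⟩ := (Set.isPWO_of_wellQuasiOrderedLE (S (cap k x) (g x))).exists_le_minimal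
    (show x ∈ S (cap k x) (g x) from ⟨rfl, le_rfl⟩)
  have hmb : m ≤ b := hb <| Set.mem_biUnion (cap_le_const k x) <|
    Set.mem_biUnion (hg (cap_le_self k x) le_rfl) hm
  have hm_le : m ≤ cap n x := fun i =>
    le_min ((hmb i).trans ((Finset.le_sup (Finset.mem_univ i)).trans (le_max_right _ _))) (hmx i)
  have hcap : cap k (cap n x) ≤ m := by
    rw [cap_cap (le_max_left _ _), ← hm.prop.1]
    exact cap_le_self k m
  exact le_antisymm ((hg hm_le hcap).trans hm.prop.2)
    (hg (cap_le_self n x) (cap_le_cap_left (le_max_left _ _) x))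

variable {K : Type} [Field K]

def IsGeneratedInBox (F : Nr r ⥤ ModuleCat K) (k : ℕ) : Prop :=
  ∀ u, Function.Surjective (F.map (homOfLE (cap_le_self k u)))

variable {F : Nr r ⥤ ModuleCat K}

theorem IsGeneratedInBox.surjective_map {k : ℕ} (hk : IsGeneratedInBox F k) {a b : Nr r}
    (hab : a ≤ b) (hcap : cap k b ≤ a) : Function.Surjective (F.map (homOfLE hab)) := by
  intro y
  obtain ⟨x, rfl⟩ := hk b y
  exact ⟨F.map (homOfLE hcap) x, map_homOfLE_map_homOfLE_apply F _ _ x⟩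

theorem isGeneratedInBox_of_isIso {n : ℕ} (h : ∀ u, IsIso (F.map (homOfLE (cap_le_self n u)))) :
    IsGeneratedInBox F n :=
  fun _ => (ConcreteCategory.bijective_of_isIso _).2

theorem IsGeneratedInBox.isFiniteRank {k : ℕ} (hk : IsGeneratedInBox F k)
    (hfd : ∀ u, FiniteDimensional K (F.obj u)) : IsFiniteRank K F := by
  have : Finite (Set.Iic (fun _ => k : Nr r)) := (Set.finite_Iic _).to_subtype
  let ι := Σ w : Set.Iic (fun _ => k : Nr r), Module.Basis.ofVectorSpaceIndex K (F.obj w)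
  refine isFiniteRank_of_finite (ι := ι) (fun j => j.1.1)
    (fun j => Module.Basis.ofVectorSpace K (F.obj j.1) j.2) fun u => eq_top_iff.mpr ?_
  rintro z -
  obtain ⟨y, rfl⟩ := hk u z
  let w : Set.Iic (fun _ => k : Nr r) := ⟨cap k u, cap_le_const k u⟩
  have hy := Submodule.mem_map_of_mem (f := (F.map (homOfLE (cap_le_self k u))).hom)
    ((Module.Basis.ofVectorSpace K (F.obj w)).mem_span y)
  rw [Submodule.map_span] at hy
  refine Submodule.span_mono ?_ hy
  rintro _ ⟨_, ⟨i, rfl⟩, rfl⟩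
  exact ⟨⟨w, i⟩, homOfLE (cap_le_self k u), rfl⟩

theorem IsGeneratedInBox.exists_isIso_map_cap {k : ℕ} (hk : IsGeneratedInBox F k)
    (hfd : ∀ u, FiniteDimensional K (F.obj u)) :
    ∃ n, ∀ u, IsIso (F.map (homOfLE (cap_le_self n u))) := by
  obtain ⟨n, hkn, hn⟩ := exists_apply_cap_eq k (fun u => Module.finrank K (F.obj u))
    fun _ _ hxy hcap => LinearMap.finrank_le_finrank_of_surjective (hk.surjective_map hxy hcap)
  refine ⟨n, fun u => (ConcreteCategory.isIso_iff_bijective _).mpr ?_⟩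
  have hsurj := hk.surjective_map (cap_le_self n u) (cap_le_cap_left hkn u)
  exact ⟨(LinearMap.injective_iff_surjective_of_finrank_eq_finrank (hn u)).mpr hsurj, hsurj⟩

variable (F) in
def boxSubfunctor (n : ℕ) : Subfunctor K F where
  toFun u := LinearMap.range (F.map (homOfLE (cap_le_self n u))).hom
  map_le {u u'} h := by
    rintro _ ⟨_, ⟨z, rfl⟩, rfl⟩
    rw [← homOfLE_leOfHom h, map_homOfLE_map_homOfLE_apply]
    exact ⟨F.map (homOfLE (cap_mono h.le)) z, map_homOfLE_map_homOfLE_apply F _ _ z⟩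

variable (F) in
def spanAway (w₀ u : Nr r) : Submodule K (F.obj u) :=
  ⨆ p : {w // w ≤ u ∧ w ≠ w₀}, LinearMap.range (F.map (homOfLE p.2.1)).hom

theorem map_mem_spanAway {w₀ w u : Nr r} (hwu : w ≤ u) (hw : w ≠ w₀) (x : F.obj w) :
    F.map (homOfLE hwu) x ∈ spanAway F w₀ u :=
  Submodule.mem_iSup_of_mem (⟨w, hwu, hw⟩ : {w // w ≤ u ∧ w ≠ w₀}) ⟨x, rfl⟩

theorem map_spanAway_le (w₀ : Nr r) {u u' : Nr r} (h : u ≤ u') :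
    (spanAway F w₀ u).map (F.map (homOfLE h)).hom ≤ spanAway F w₀ u' := by
  rw [spanAway, Submodule.map_iSup]
  refine iSup_le fun p => ?_
  rintro _ ⟨_, ⟨z, rfl⟩, rfl⟩
  rw [map_homOfLE_map_homOfLE_apply]
  exact map_mem_spanAway _ p.2.2 z

variable (F) in
def spanAwaySup (w₀ : Nr r) (C : Submodule K (F.obj w₀)) : Subfunctor K F where
  toFun u := spanAway F w₀ u ⊔ ⨆ h : w₀ ≤ u, C.map (F.map (homOfLE h)).hom
  map_le {u u'} h := by
    rw [← homOfLE_leOfHom h, Submodule.map_sup, Submodule.map_iSup]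
    refine sup_le_sup (map_spanAway_le w₀ h.le) (iSup_le fun hw => ?_)
    refine le_iSup_of_le (hw.trans h.le) ?_
    rintro _ ⟨_, ⟨c, hc, rfl⟩, rfl⟩
    exact ⟨c, hc, (map_homOfLE_map_homOfLE_apply F _ _ c).symm⟩

end Nr

open Nr

section

variable {K : Type} [Field K] {r : ℕ} {F : Nr r ⥤ ModuleCat K}

theorem IsCompactFunctor.exists_isGeneratedInBox (hc : IsCompactFunctor K F) :
    ∃ k, IsGeneratedInBox F k := by
  obtain ⟨k, hk⟩ := hc (boxSubfunctor F)
    (fun n u => by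
      rintro _ ⟨z, rfl⟩
      exact ⟨F.map (homOfLE (cap_le_cap_left n.le_succ u)) z,
        map_homOfLE_map_homOfLE_apply F _ _ z⟩)
    (fun u => by
      refine eq_top_iff.mpr fun x _ => Submodule.mem_iSup_of_mem (Finset.univ.sup u) ?_
      have hu : u ≤ cap (Finset.univ.sup u) u :=
        (cap_eq_self fun i => Finset.le_sup (Finset.mem_univ i)).ge
      refine ⟨F.map (homOfLE hu) x, ?_⟩
      rw [map_homOfLE_map_homOfLE_apply, map_homOfLE_refl_apply])
  exact ⟨k, fun u x => (hk u).ge Submodule.mem_top⟩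

theorem IsCompactFunctor.exists_spanAway_sup_eq_top (hc : IsCompactFunctor K F) {k : ℕ}
    (hk : IsGeneratedInBox F k) (w₀ : Nr r) (C : ℕ → Submodule K (F.obj w₀)) (hC : Monotone C)
    (htop : ⨆ m, C m = ⊤) : ∃ m, spanAway F w₀ w₀ ⊔ C m = ⊤ := by
  obtain ⟨m, hm⟩ := hc (fun m => spanAwaySup F w₀ (C m))
    (fun m _ => sup_le_sup le_rfl (iSup_mono fun _ => Submodule.map_mono (hC m.le_succ)))
    (fun u => by
      refine eq_top_iff.mpr fun x _ => ?_
      obtain ⟨y, rfl⟩ := hk u x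
      by_cases hcap : cap k u = w₀
      · subst hcap
        obtain ⟨m, hm⟩ := (Submodule.mem_iSup_of_directed _ hC.directed_le).mp
          (htop ▸ Submodule.mem_top : y ∈ ⨆ m, C m)
        exact Submodule.mem_iSup_of_mem m (Submodule.mem_sup_right
          (Submodule.mem_iSup_of_mem (cap_le_self k u) ⟨y, hm, rfl⟩))
      · exact Submodule.mem_iSup_of_mem 0
          (Submodule.mem_sup_left (map_mem_spanAway (cap_le_self k u) hcap y)))
  refine ⟨m, eq_top_iff.mpr ((hm w₀).ge.trans (sup_le le_sup_left (iSup_le fun h => ?_)))⟩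
  rintro _ ⟨c, hc, rfl⟩
  exact Submodule.mem_sup_right ((map_homOfLE_refl_apply F h c).symm ▸ hc)

theorem IsCompactFunctor.finiteDimensional (hc : IsCompactFunctor K F) (v : Nr r) :
    FiniteDimensional K (F.obj v) := by
  obtain ⟨k, hk⟩ := hc.exists_isGeneratedInBox
  induction v using WellFoundedLT.induction with
  | ind w₀ IH =>
  have : Finite {w // w ≤ w₀ ∧ w ≠ w₀} :=
    ((Set.finite_Iic w₀).subset fun _ hw => hw.1).to_subtype
  have : ∀ p : {w // w ≤ w₀ ∧ w ≠ w₀}, FiniteDimensional K (F.obj p.1) :=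
    fun p => IH p.1 (lt_of_le_of_ne p.2.1 p.2.2)
  have : FiniteDimensional K (spanAway F w₀ w₀) := by
    unfold spanAway
    infer_instance
  have : FiniteDimensional K (F.obj w₀ ⧸ spanAway F w₀ w₀) :=
    Submodule.finiteDimensional_quotient_of_forall_chain _ (hc.exists_spanAway_sup_eq_top hk w₀)
  exact Module.Finite.of_submodule_quotient (spanAway F w₀ w₀)

end

theorem isCompactFunctor_iff_finiteDimensional_and_isGeneratedInBox {K : Type} [Field K]
    {r : ℕ} {F : Nr r ⥤ ModuleCat K} :
    IsCompactFunctor K F ↔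
      (∀ v, FiniteDimensional K (F.obj v)) ∧ ∃ k, IsGeneratedInBox F k :=
  ⟨fun hc => ⟨hc.finiteDimensional, hc.exists_isGeneratedInBox⟩,
    fun ⟨hfd, _, hk⟩ => (hk.isFiniteRank hfd).isCompactFunctor⟩

/-- A functor `F : ℕ^r ⥤ Vect_K` is compact iff it is of finite rank, iff (1) all its values
are finite dimensional and (2) there is `n` such that for every `v` the map
`F((min(n,v₁),…,min(n,v_r)) ≤ v)` is an isomorphism. -/
theorem isCompact_iff_finiteRank_iff (K : Type) [Field K] (r : ℕ) (F : Nr r ⥤ ModuleCat K) :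
    (IsCompactFunctor K F ↔ IsFiniteRank K F) ∧
    (IsCompactFunctor K F ↔
      ((∀ v : Nr r, FiniteDimensional K (F.obj v)) ∧
        ∃ n : ℕ, ∀ v : Nr r,
          IsIso (F.map (homOfLE (show (fun i => min n (v i)) ≤ v from
            fun i => min_le_right _ _))))) := by
  have hbox := isCompactFunctor_iff_finiteDimensional_and_isGeneratedInBox (F := F)
  refine ⟨⟨fun hc => ?_, IsFiniteRank.isCompactFunctor⟩, hbox.trans (and_congr_right fun hfd => ?_)⟩
  · obtain ⟨hfd, _, hk⟩ := hbox.mp hc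
    exact hk.isFiniteRank hfd
  · exact ⟨fun ⟨_, hk⟩ => hk.exists_isIso_map_cap hfd,
      fun ⟨n, hn⟩ => ⟨n, isGeneratedInBox_of_isIso hn⟩⟩
end

section
/- Every projective object in Fun(N^r, Vect_K) is free, i.e., isomorphic to a direct sum ⊕_{v∈N^r} K(v,−)⊗V_v. -/
open CategoryTheory CategoryTheory.Limits

set_option synthInstance.maxHeartbeats 1000000
set_option maxHeartbeats 1000000

attribute [local instance 2000] Preorder.smallCategory

/-- The free functor on one generator `K(v,-) : ℕ^r ⥤ Vect_K`. -/
noncomputable def freeN (K : Type) [Field K] {r : ℕ} (v : Nr r) : Nr r ⥤ ModuleCat K :=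
  coyoneda.obj (Opposite.op v) ⋙ ModuleCat.free K

/-- A functor `ℕ^r ⥤ Vect_K` is free if it is isomorphic to a direct sum
`⊕_{v} K(v,-) ⊗ V_v`, i.e. to a coproduct of functors `K(vᵢ,-)`. -/
def IsFreeFunctor (K : Type) [Field K] {r : ℕ} (F : Nr r ⥤ ModuleCat K) : Prop :=
  ∃ (ι : Type) (v : ι → Nr r), Nonempty (F ≅ ∐ fun i => freeN K (v i))

/-!
For `G : P ⥤ Vect_K` on a well-founded poset `P`, let `rad G w ⊆ G w` be the span of the images
of all `G u → G w` with `u < w`. Lifting bases of the quotients `G w / rad G w` gives a map `π`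
from a free functor to `G`, which is surjective by a graded Nakayama argument: a map that is
surjective modulo radicals is surjective, by well-founded induction. The kernel of `π` lies in
the radical of the free functor, so if `G` is projective, a section `s` of `π` is surjective
modulo radicals as well; being split mono, `s` is then an isomorphism.
-/

lemma ModuleCat.span_range_freeMk {R : Type} [Ring R] (X : Type) :
    Submodule.span R (Set.range (ModuleCat.freeMk : X → (ModuleCat.free R).obj X)) = ⊤ :=
  Finsupp.basisSingleOne.span_eq

lemma ModuleCat.iSup_range_sigmaι_app {R : Type} [Ring R] {C : Type} [SmallCategory C] {ι : Type}
    (F : ι → C ⥤ ModuleCat R) (w : C) :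
    ⨆ i, LinearMap.range ((Sigma.ι F i).app w).hom = ⊤ := by
  set S := ⨆ i, LinearMap.range ((Sigma.ι F i).app w).hom
  have hc := isColimitOfPreserves ((evaluation C (ModuleCat R)).obj w)
    (colimit.isColimit (Discrete.functor F))
  have hq : ModuleCat.ofHom S.mkQ = 0 := hc.hom_ext fun ⟨i⟩ =>
    ModuleCat.hom_ext <| LinearMap.ext fun x =>
      (Submodule.Quotient.mk_eq_zero S).2 (Submodule.mem_iSup_of_mem i ⟨x, rfl⟩)
  rw [← Submodule.ker_mkQ S, ← ModuleCat.hom_ofHom S.mkQ, hq, ModuleCat.hom_zero,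
    LinearMap.ker_zero]

namespace PosetModule

variable {K : Type} [DivisionRing K]

section Preorder

variable {P : Type} [Preorder P]

noncomputable abbrev freeRep (K : Type) [DivisionRing K] (v : P) : P ⥤ ModuleCat K :=
  coyoneda.obj (Opposite.op v) ⋙ ModuleCat.free K

noncomputable def freeRepDesc (G : P ⥤ ModuleCat K) {u : P} (x : G.obj u) :
    freeRep K u ⟶ G where
  app w := ModuleCat.freeDesc (TypeCat.ofHom fun f : u ⟶ w => G.map f x)
  naturality w w' g := by
    refine ModuleCat.free_hom_ext fun f => ?_
    simp

@[simp]
lemma freeRepDesc_app_freeMk (G : P ⥤ ModuleCat K) {u w : P} (x : G.obj u) (f : u ⟶ w) :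
    (freeRepDesc G x).app w (ModuleCat.freeMk f) = G.map f x :=
  ModuleCat.freeDesc_apply _ f

def rad (G : P ⥤ ModuleCat K) (w : P) : Submodule K (G.obj w) :=
  ⨆ u : {u : P // u < w}, LinearMap.range (G.map (homOfLE u.2.le)).hom

lemma map_mem_rad (G : P ⥤ ModuleCat K) {u w : P} (h : u < w) (x : G.obj u) :
    G.map (homOfLE h.le) x ∈ rad G w :=
  Submodule.mem_iSup_of_mem ⟨u, h⟩ ⟨x, rfl⟩

variable {F G : P ⥤ ModuleCat K}

lemma rad_le_comap (f : F ⟶ G) (w : P) : rad F w ≤ (rad G w).comap (f.app w).hom := by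
  refine iSup_le fun ⟨u, hu⟩ => ?_
  rintro _ ⟨x, rfl⟩
  simpa using map_mem_rad G hu (f.app u x)

lemma rad_le_range (f : F ⟶ G) {w : P} (h : ∀ u < w, Function.Surjective (f.app u)) :
    rad G w ≤ LinearMap.range (f.app w).hom := by
  refine iSup_le fun ⟨u, hu⟩ => ?_
  rintro _ ⟨y, rfl⟩
  obtain ⟨x, rfl⟩ := h u hu y
  exact ⟨F.map (homOfLE hu.le) x, NatTrans.naturality_apply f _ x⟩

lemma epi_of_range_sup_rad_eq_top [WellFoundedLT P] (f : F ⟶ G)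
    (h : ∀ w, LinearMap.range (f.app w).hom ⊔ rad G w = ⊤) : Epi f := by
  have surjective (w : P) : Function.Surjective (f.app w) := by
    induction w using WellFoundedLT.induction with
    | _ w ih =>
      rw [← LinearMap.range_eq_top, ← h w, sup_eq_left.2 (rad_le_range f ih)]
  have (w : P) := (ModuleCat.epi_iff_surjective (f.app w)).2 (surjective w)
  exact NatTrans.epi_of_epi_app f

variable (G)

abbrev CoverIndex : Type := Σ w : P, Module.Basis.ofVectorSpaceIndex K (G.obj w ⧸ rad G w)

noncomputable abbrev cover : P ⥤ ModuleCat K := ∐ fun i : CoverIndex G => freeRep K i.1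

noncomputable def coverπ : cover G ⟶ G :=
  Sigma.desc fun i => freeRepDesc G (Function.surjInv (rad G i.1).mkQ_surjective i.2)

noncomputable def coverGen (w : P)
    (b : Module.Basis.ofVectorSpaceIndex K (G.obj w ⧸ rad G w)) : (cover G).obj w :=
  (Sigma.ι (fun i : CoverIndex G => freeRep K i.1) ⟨w, b⟩).app w (ModuleCat.freeMk (𝟙 w))

lemma mkQ_coverπ_coverGen (w : P)
    (b : Module.Basis.ofVectorSpaceIndex K (G.obj w ⧸ rad G w)) :
    (rad G w).mkQ ((coverπ G).app w (coverGen G w b)) = b := by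
  rw [coverGen, ← ConcreteCategory.comp_apply, ← NatTrans.comp_app, coverπ, Sigma.ι_desc,
    freeRepDesc_app_freeMk, CategoryTheory.Functor.map_id, ModuleCat.id_apply]
  exact Function.surjInv_eq _ _

lemma range_coverπ_sup_rad (w : P) :
    LinearMap.range ((coverπ G).app w).hom ⊔ rad G w = ⊤ := by
  rw [sup_comm, ← Submodule.comap_map_mkQ, eq_top_iff, ← Submodule.comap_top (rad G w).mkQ]
  refine Submodule.comap_mono ?_
  rw [← (Module.Basis.ofVectorSpace K (G.obj w ⧸ rad G w)).span_eq, Submodule.span_le]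
  rintro _ ⟨b, rfl⟩
  rw [Module.Basis.ofVectorSpace_apply_self, ← mkQ_coverπ_coverGen]
  exact Submodule.mem_map_of_mem ⟨_, rfl⟩

instance [WellFoundedLT P] : Epi (coverπ G) :=
  epi_of_range_sup_rad_eq_top _ (range_coverπ_sup_rad G)

end Preorder

section PartialOrder

variable {P : Type} [PartialOrder P] (G : P ⥤ ModuleCat K)

lemma span_coverGen_sup_rad (w : P) :
    Submodule.span K (Set.range (coverGen G w)) ⊔ rad (cover G) w = ⊤ := by
  rw [eq_top_iff, ← ModuleCat.iSup_range_sigmaι_app]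
  refine iSup_le fun ⟨u, b⟩ => ?_
  rw [LinearMap.range_eq_map, ← ModuleCat.span_range_freeMk, Submodule.map_span_le]
  rintro _ ⟨f, rfl⟩
  obtain rfl | hlt := (leOfHom f).eq_or_lt
  · obtain rfl : f = 𝟙 u := Subsingleton.elim (α := u ⟶ u) _ _
    exact Submodule.mem_sup_left (Submodule.subset_span ⟨b, rfl⟩)
  · obtain rfl : f = homOfLE hlt.le := Subsingleton.elim (α := u ⟶ w) _ _
    refine Submodule.mem_sup_right ?_
    have hf : (ModuleCat.freeMk (homOfLE hlt.le) : (freeRep K u).obj w) =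
        (freeRep K u).map (homOfLE hlt.le) (ModuleCat.freeMk (𝟙 u)) := by
      simp
    rw [hf, NatTrans.naturality_apply]
    exact map_mem_rad (cover G) hlt _

lemma ker_coverπ_le_rad (w : P) : LinearMap.ker ((coverπ G).app w).hom ≤ rad (cover G) w := by
  intro x hx
  have hx' :
      x ∈ LinearMap.range (Finsupp.linearCombination K (coverGen G w)) ⊔ rad (cover G) w := by
    rw [Finsupp.range_linearCombination, span_coverGen_sup_rad]
    trivial
  obtain ⟨_, ⟨c, rfl⟩, y, hy, rfl⟩ := Submodule.mem_sup.1 hx'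
  suffices c = 0 by simpa [this] using hy
  have hli : LinearIndependent K fun b => (rad G w).mkQ ((coverπ G).app w (coverGen G w b)) := by
    simpa only [mkQ_coverπ_coverGen] using Module.Basis.ofVectorSpaceIndex.linearIndependent K _
  refine linearIndependent_iff.1 hli c ?_
  have hπ : ((coverπ G).app w).hom (Finsupp.linearCombination K (coverGen G w) c) =
      -((coverπ G).app w).hom y :=
    eq_neg_of_add_eq_zero_left (by simpa using hx)
  refine (Finsupp.apply_linearCombination K ((rad G w).mkQ ∘ₗ ((coverπ G).app w).hom)
    (coverGen G w) c).symm.trans ?_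
  rw [LinearMap.comp_apply, hπ, map_neg, neg_eq_zero, Submodule.mkQ_apply,
    Submodule.Quotient.mk_eq_zero]
  exact rad_le_comap _ w hy

lemma isIso_of_comp_coverπ_eq_id [WellFoundedLT P] (s : G ⟶ cover G)
    (hs : s ≫ coverπ G = 𝟙 G) : IsIso s := by
  have : Mono s := mono_of_mono_fac hs
  have : Epi s := epi_of_range_sup_rad_eq_top s fun w => by
    refine eq_top_iff.2 fun x _ => Submodule.mem_sup.2 ⟨_, ⟨(coverπ G).app w x, rfl⟩, _,
      ker_coverπ_le_rad G w ?_, add_sub_cancel _ x⟩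
    simp [← ConcreteCategory.comp_apply, ← NatTrans.comp_app, hs]
  exact isIso_of_mono_of_epi s

end PartialOrder

end PosetModule

/-- Every projective object in `Fun(ℕ^r, Vect_K)` is free. -/
theorem projective_isFree (K : Type) [Field K] (r : ℕ) (F : Nr r ⥤ ModuleCat K)
    (hF : Projective F) : IsFreeFunctor K F := by
  obtain ⟨s, hs⟩ : ∃ s, s ≫ PosetModule.coverπ F = 𝟙 F :=
    ⟨_, Projective.factorThru_comp _ _⟩
  have := PosetModule.isIso_of_comp_coverπ_eq_id F s hs
  exact ⟨PosetModule.CoverIndex F, Sigma.fst, ⟨(asIso s : F ≅ PosetModule.cover F)⟩⟩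
end

section
/- Let V = Cone(v_1,…,v_n) and L = Cone(v_1+⋯+v_n) in Q≥0^r. If ‖v_1‖ = ⋯ = ‖v_n‖ = ‖v_1+⋯+v_n‖, then the standard noise systems in the direction of V and of L coincide: V_ε = L_ε for all ε. -/
/-!
A vector `w = ∑ cᵢ vᵢ` of the cone has `cᵢ ‖vᵢ‖ ≤ ‖w‖`, so when all `‖vᵢ‖` equal `‖s‖` for
`s = ∑ vᵢ`, every coefficient is at most `‖w‖ / ‖s‖` and `w ≤ (‖w‖ / ‖s‖) • s`, a point of the
ray of the same norm. Since a functor that kills `x` along `u ≤ u + w` also kills it along any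
larger translation, each cone witness can be replaced by a ray witness; the converse holds
because the ray lies in the cone.
-/

open CategoryTheory CategoryTheory.Limits

set_option synthInstance.maxHeartbeats 1000000
set_option maxHeartbeats 1000000

attribute [local instance 2000] Preorder.smallCategory
attribute [local instance] CategoryTheory.Abelian.hasFiniteBiproducts

/-- The cone generated by `g 0, …, g (n-1)`. -/
def coneOf {r n : ℕ} (g : Fin n → Qr r) : Set (Qr r) :=
  {w | ∃ c : Fin n → ℚ≥0, w = ∑ i, c i • g i}

/-- The max-norm on `ℚ≥0^r`. -/
def normQ {r : ℕ} (w : Qr r) : ℚ≥0 := Finset.univ.sup w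

/-- The `ε`-component of the standard noise in the direction of a cone `V`. -/
def Veps (K : Type) [Field K] {r : ℕ} (V : Set (Qr r)) (ε : ℚ≥0) :
    Set (Qr r ⥤ ModuleCat K) :=
  {F | IsTame F ∧ ∀ (u : Qr r) (x : F.obj u), ∃ w ∈ V, normQ w = ε ∧
    F.map (homOfLE (show u ≤ u + w from fun _ => le_self_add)) x = 0}

theorem le_normQ {r : ℕ} (w : Qr r) (i : Fin r) : w i ≤ normQ w :=
  Finset.le_sup (Finset.mem_univ i)

theorem normQ_mono {r : ℕ} {v w : Qr r} (h : v ≤ w) : normQ v ≤ normQ w :=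
  Finset.sup_mono_fun fun i _ => h i

theorem normQ_smul {r : ℕ} (c : ℚ≥0) (w : Qr r) : normQ (c • w) = c * normQ w := by
  simp only [normQ, Finset.mul_sup₀]
  rfl

theorem eq_zero_of_normQ_eq_zero {r : ℕ} {w : Qr r} (h : normQ w = 0) : w = 0 :=
  funext fun i => le_antisymm ((le_normQ w i).trans h.le) zero_le

theorem mul_normQ_le_normQ_sum {r n : ℕ} (c : Fin n → ℚ≥0) (g : Fin n → Qr r) (i : Fin n) :
    c i * normQ (g i) ≤ normQ (∑ j, c j • g j) := by
  rw [← normQ_smul]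
  exact normQ_mono <| Finset.single_le_sum (f := fun j => c j • g j)
    (fun _ _ => zero_le) (Finset.mem_univ i)

theorem coneOf_const_sum_subset {r n : ℕ} (g : Fin n → Qr r) :
    coneOf (fun _ : Fin 1 => ∑ j, g j) ⊆ coneOf g := by
  rintro w ⟨c, rfl⟩
  exact ⟨fun _ => c 0, by rw [Fin.sum_univ_one, Finset.smul_sum]⟩

theorem exists_mem_coneOf_const_sum_ge {r n : ℕ} {g : Fin n → Qr r}
    (hnorm : ∀ i, normQ (g i) = normQ (∑ j, g j)) {w : Qr r} (hw : w ∈ coneOf g) :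
    ∃ w' ∈ coneOf (fun _ : Fin 1 => ∑ j, g j), normQ w' = normQ w ∧ w ≤ w' := by
  obtain ⟨c, rfl⟩ := hw
  set s := ∑ j, g j
  by_cases hs : normQ s = 0
  · have hg : ∀ i, g i = 0 := fun i => eq_zero_of_normQ_eq_zero ((hnorm i).trans hs)
    exact ⟨0, ⟨0, by simp⟩, by simp [hg], by simp [hg]⟩
  set t := normQ (∑ j, c j • g j) / normQ s
  have hc : ∀ i, c i ≤ t := fun i =>
    (le_div_iff₀ (pos_of_ne_zero hs)).2 (hnorm i ▸ mul_normQ_le_normQ_sum c g i)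
  refine ⟨t • s, ⟨fun _ => t, by simp⟩, by rw [normQ_smul, div_mul_cancel₀ _ hs], ?_⟩
  rw [Finset.smul_sum]
  exact Finset.sum_le_sum fun i _ => smul_le_smul_of_nonneg_right (hc i) zero_le

theorem map_homOfLE_eq_zero_of_le {K : Type} [Field K] {P : Type*} [Preorder P]
    (F : P ⥤ ModuleCat K) {u a b : P} (hua : u ≤ a) (hab : a ≤ b) {x : F.obj u}
    (hx : F.map (homOfLE hua) x = 0) : F.map (homOfLE (hua.trans hab)) x = 0 := by
  rw [show homOfLE (hua.trans hab) = homOfLE hua ≫ homOfLE hab from rfl, F.map_comp,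
    ModuleCat.comp_apply, hx, map_zero]

theorem Veps_subset_of_forall_exists_ge (K : Type) [Field K] {r : ℕ} {V W : Set (Qr r)}
    (h : ∀ w ∈ V, ∃ w' ∈ W, normQ w' = normQ w ∧ w ≤ w') (ε : ℚ≥0) :
    Veps K V ε ⊆ Veps K W ε := by
  rintro F ⟨hF, hkill⟩
  refine ⟨hF, fun u x => ?_⟩
  obtain ⟨w, hwV, rfl, hx⟩ := hkill u x
  obtain ⟨w', hw'W, hnorm, hle⟩ := h w hwV
  exact ⟨w', hw'W, hnorm, map_homOfLE_eq_zero_of_le F _ (add_le_add_right hle u) hx⟩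

theorem standardNoise_cone_eq_ray_general (K : Type) [Field K] (r n : ℕ)
    (g : Fin n → Qr r) (hnorm : ∀ i, normQ (g i) = normQ (∑ j, g j)) :
    ∀ ε : ℚ≥0, Veps K (coneOf g) ε = Veps K (coneOf (fun _ : Fin 1 => ∑ j, g j)) ε := fun ε =>
  (Veps_subset_of_forall_exists_ge K (fun _ => exists_mem_coneOf_const_sum_ge hnorm) ε).antisymm
    (Veps_subset_of_forall_exists_ge K
      (fun w hw => ⟨w, coneOf_const_sum_subset g hw, rfl, le_rfl⟩) ε)

/-- If `‖v₁‖ = ⋯ = ‖vₙ‖ = ‖v₁ + ⋯ + vₙ‖`, then the standard noise in the direction of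
`Cone(v₁,…,vₙ)` coincides with the standard noise in the direction of the ray
`Cone(v₁+⋯+vₙ)`. -/
theorem standardNoise_cone_eq_ray (K : Type) [Field K] (r n : ℕ) (hn : 0 < n)
    (g : Fin n → Qr r) (hnorm : ∀ i, normQ (g i) = normQ (∑ j, g j)) :
    ∀ ε : ℚ≥0, Veps K (coneOf g) ε = Veps K (coneOf (fun _ : Fin 1 => ∑ j, g j)) ε :=
  standardNoise_cone_eq_ray_general K r n g hnorm
end
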